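/- arXiv:2109.04159 — 3 statements merged into one kernel-verified Lean document; each statement's English description precedes it below -/
import Mathlib

section
/- Let A ⊂ ℝ^N be measurable, p ∈ (1,∞), 0 < s ≤ t < 1 with sp/2 < 1 and tp/2 < 1. Assume that for some constant C₀ > 0 and all 0 < σ ≤ τ < 1 one has min{σ,1-σ}^{1/2} [g]_{W^{σ,2}} ≤ C₀ (‖g‖_{L²} + min{τ,1-τ}^{1/2} [g]_{W^{τ,2}}) for all g ∈ L²(ℝ^N). Then min{s,1-s}^{1/p} [χ_A]_{W^{s,p}(ℝ^N)} ≤ C (‖χ_A‖_{L^p(ℝ^N)} + min{t,1-t}^{1/p} [χ_A]_{W^{t,p}(ℝ^N)}) for a constant C depending only on p and C₀. -/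
open MeasureTheory ENNReal
open scoped ENNReal

/-- The Gagliardo seminorm `[f]_{W^{s,q}(ℝ^N)}`, valued in `[0,∞]`. -/
noncomputable def gagliardoSeminorm (N : ℕ) (s q : ℝ)
    (f : EuclideanSpace ℝ (Fin N) → ℝ) : ℝ≥0∞ :=
  (∫⁻ x, ∫⁻ y, ENNReal.ofReal (|f x - f y| ^ q / ‖x - y‖ ^ ((N : ℝ) + s * q))) ^ (1 / q)

open Metric Set
open scoped RealInnerProductSpace

namespace IndSharp2
variable {N : ℕ}
abbrev E (N : ℕ) := EuclideanSpace ℝ (Fin N)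
noncomputable def ind (A : Set (E N)) : E N → ℝ := Set.indicator A fun _ => (1 : ℝ)
noncomputable def dblJ (N : ℕ) (A : Set (E N)) (a : ℝ) : ℝ≥0∞ :=
  ∫⁻ x, ∫⁻ y, ENNReal.ofReal (|ind A x - ind A y| / ‖x - y‖ ^ ((N : ℝ) + a))

lemma ind_abs_mem (A : Set (E N)) {x y : E N} :
    |ind A x - ind A y| = 0 ∨ |ind A x - ind A y| = 1 := by
  unfold ind
  by_cases hx : x ∈ A <;> by_cases hy : y ∈ A <;> simp [hx, hy]

lemma ind_abs_rpow (A : Set (E N)) {q : ℝ} (hq : q ≠ 0) (x y : E N) :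
    |ind A x - ind A y| ^ q = |ind A x - ind A y| := by
  rcases ind_abs_mem A (x := x) (y := y) with h | h <;> rw [h]
  · exact Real.zero_rpow hq
  · exact Real.one_rpow q

lemma gag_eq_dblJ (A : Set (E N)) {s q : ℝ} (hq : q ≠ 0) :
    gagliardoSeminorm N s q (ind A) = dblJ N A (s * q) ^ (1 / q) := by
  unfold gagliardoSeminorm dblJ
  congr 1
  refine lintegral_congr fun x => lintegral_congr fun y => ?_
  rw [ind_abs_rpow A hq]

lemma add_rpow_le (x y : ℝ≥0∞) {γ : ℝ} (hγ : 0 ≤ γ) :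
    (x + y) ^ γ ≤ ENNReal.ofReal (2 ^ γ) * (x ^ γ + y ^ γ) := by
  have h2 : ENNReal.ofReal (2 ^ γ) = (2 : ℝ≥0∞) ^ γ := by
    rw [← ENNReal.ofReal_ofNat 2, ENNReal.ofReal_rpow_of_nonneg (by norm_num) hγ]
  rw [h2]
  calc (x + y) ^ γ ≤ (2 * (x ⊔ y)) ^ γ := by
        apply ENNReal.rpow_le_rpow _ hγ
        rw [two_mul]
        exact add_le_add le_sup_left le_sup_right
    _ = (2:ℝ≥0∞) ^ γ * (x ⊔ y) ^ γ := ENNReal.mul_rpow_of_nonneg _ _ hγ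
    _ ≤ (2:ℝ≥0∞) ^ γ * (x ^ γ + y ^ γ) := by
        apply mul_le_mul_right
        rcases le_total x y with h | h
        · rw [sup_eq_right.2 h]; exact le_add_self
        · rw [sup_eq_left.2 h]; exact le_self_add

lemma ind_nonneg (A : Set (E N)) (x : E N) : 0 ≤ ind A x := by
  unfold ind; by_cases h : x ∈ A <;> simp [h]

lemma ofReal_ind (A : Set (E N)) :
    (fun x => ENNReal.ofReal (ind A x)) = A.indicator (fun _ => (1 : ℝ≥0∞)) := by
  funext x; by_cases h : x ∈ A <;> simp [ind, h]

lemma slab (A : Set (E N)) (hA : MeasurableSet A) (hfin : volume A ≠ ⊤) (x₀ : E N)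
    {h : E N} (hh : h ≠ 0) (hhr : ‖h‖ ≤ 1) :
    volume (A ∩ closedBall x₀ 1) * ENNReal.ofReal (‖h‖ / 4) ≤
      ∫⁻ x, ENNReal.ofReal |ind A x - ind A (x + h)| := by
  set δ : ℝ := ‖h‖ with hδdef
  have hδ : 0 < δ := norm_pos_iff.2 hh
  set e : E N := δ⁻¹ • h with hedef
  have heh : ⟪e, h⟫ = δ := by
    rw [hedef, real_inner_smul_left, real_inner_self_eq_norm_mul_norm]
    field_simp
    rfl
  have hme : Measurable fun x : E N => ⟪e, x⟫ :=
    (continuous_const.inner continuous_id).measurable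
  set β : ℝ := ⟪e, x₀⟫ - 1 - δ with hβdef
  set K : ℕ := ⌈(3:ℝ)/δ⌉₊ with hKdef
  have hK1 : 1 ≤ K := Nat.one_le_ceil_iff.2 (by positivity)
  have hKle : (K : ℝ) ≤ 4 / δ := by
    have h1 : (K : ℝ) < 3/δ + 1 := Nat.ceil_lt_add_one (by positivity)
    have h2 : (1:ℝ) ≤ 1/δ := by rw [le_div_iff₀ hδ]; linarith
    have h3 : 3/δ + 1/δ = 4/δ := by rw [← add_div]; norm_num
    linarith
  set S : ℕ → Set (E N) := fun k => (fun x => ⟪e, x⟫) ⁻¹' (Set.Ioc (β + k*δ) (β + (k+1)*δ))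
    with hSdef
  have hmS : ∀ k, MeasurableSet (S k) := fun k => hme measurableSet_Ioc
  -- covering
  have cover : closedBall x₀ 1 ⊆ ⋃ k ∈ Finset.range K, S k := by
    intro x hx
    have hx1 : ‖x - x₀‖ ≤ 1 := by rwa [mem_closedBall_iff_norm] at hx
    have hinner : |⟪e, x⟫ - ⟪e, x₀⟫| ≤ 1 := by
      rw [← inner_sub_right]
      calc |⟪e, x - x₀⟫| ≤ ‖e‖ * ‖x - x₀‖ := abs_real_inner_le_norm e (x - x₀)
        _ ≤ ‖e‖ * 1 := by
            exact mul_le_mul_of_nonneg_left hx1 (norm_nonneg e)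
        _ ≤ 1 * 1 := by
            have he1 : ‖e‖ = 1 := by
              rw [hedef, norm_smul, norm_inv, Real.norm_eq_abs, abs_of_pos hδ]
              field_simp
              rfl
            simp [he1]
        _ = 1 := by ring
    set v : ℝ := ⟪e, x⟫ - β with hvdef
    have hv1 : δ ≤ v := by
      have := abs_le.1 hinner
      rw [hvdef, hβdef]; linarith [this.1]
    have hv3 : v ≤ 3 := by
      have hab := abs_le.1 hinner
      have h2d : v ≤ 2 + δ := by rw [hvdef, hβdef]; linarith [hab.2]
      linarith [hhr]
    set m : ℕ := ⌈v/δ⌉₊ with hmdef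
    have hv0 : 0 < v := lt_of_lt_of_le hδ hv1
    have hm1 : 1 ≤ m := Nat.one_le_ceil_iff.2 (div_pos hv0 hδ)
    have hmK : m ≤ K := Nat.ceil_le_ceil ((div_le_div_iff_of_pos_right hδ).2 hv3)
    refine Set.mem_iUnion.2 ⟨m - 1, Set.mem_iUnion.2 ⟨?_, ?_⟩⟩
    · exact Finset.mem_range.2 (lt_of_lt_of_le (Nat.sub_lt hm1 one_pos) hmK)
    · have hcast : ((m - 1 : ℕ) : ℝ) = (m : ℝ) - 1 := by
        rw [Nat.cast_sub hm1]; norm_num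
      constructor
      · show β + (m-1:ℕ)*δ < ⟪e, x⟫
        have : ((m - 1 : ℕ) : ℝ) < v / δ := by
          rw [← Nat.lt_ceil]; exact Nat.sub_lt hm1 one_pos
        have := (lt_div_iff₀ hδ).1 this
        rw [hvdef] at this; linarith
      · show ⟪e, x⟫ ≤ β + ((m-1:ℕ)+1)*δ
        have h1 : v / δ ≤ (m : ℝ) := Nat.le_ceil _
        have := (div_le_iff₀ hδ).1 h1
        rw [hvdef] at this; rw [hcast]; linarith
  -- pigeonhole
  set M : ℝ≥0∞ := volume (A ∩ closedBall x₀ 1) with hMdef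
  have hMsum : M ≤ ∑ k ∈ Finset.range K, volume (A ∩ S k) := by
    calc M ≤ volume (⋃ k ∈ Finset.range K, A ∩ S k) := by
          apply measure_mono
          intro x hx
          obtain ⟨k, hk1, hk2⟩ := Set.mem_iUnion₂.1 (cover hx.2)
          exact Set.mem_iUnion₂.2 ⟨k, hk1, hx.1, hk2⟩
      _ ≤ ∑ k ∈ Finset.range K, volume (A ∩ S k) := measure_biUnion_finset_le _ _
  obtain ⟨k, -, hk⟩ : ∃ k ∈ Finset.range K, M / K ≤ volume (A ∩ S k) := by
    obtain ⟨k₀, hk₀mem, hk₀⟩ := Finset.exists_max_image (Finset.range K)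
      (fun k => volume (A ∩ S k)) ⟨0, Finset.mem_range.2 (by omega)⟩
    refine ⟨k₀, hk₀mem, ENNReal.div_le_of_le_mul ?_⟩
    calc M ≤ ∑ k ∈ Finset.range K, volume (A ∩ S k) := hMsum
      _ ≤ (Finset.range K).card • volume (A ∩ S k₀) := Finset.sum_le_card_nsmul _ _ _ hk₀
      _ = volume (A ∩ S k₀) * K := by
          rw [Finset.card_range, nsmul_eq_mul, mul_comm]
  -- halfspaces
  set H : Set (E N) := (fun x => ⟪e, x⟫) ⁻¹' (Set.Ioi (β + k*δ)) with hHdef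
  set Hh : Set (E N) := (fun x => ⟪e, x⟫) ⁻¹' (Set.Ioi (β + (k+1)*δ)) with hHhdef
  have hmH : MeasurableSet H := hme measurableSet_Ioi
  have hmHh : MeasurableSet Hh := hme measurableSet_Ioi
  have c1 : ∫⁻ x in H, ENNReal.ofReal (ind A x) = volume (A ∩ H) := by
    rw [ofReal_ind A]
    have := lintegral_indicator_one (μ := volume.restrict H) hA
    rw [Measure.restrict_apply hA] at this
    exact this
  have c2 : ∫⁻ x in H, ENNReal.ofReal (ind A (x + h)) = volume (A ∩ Hh) := by
    have hmem : ∀ x : E N, x + -h ∈ H ↔ x ∈ Hh := by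
      intro x
      simp only [hHdef, hHhdef, Set.mem_preimage, Set.mem_Ioi, inner_add_right,
        inner_neg_right, heh]
      constructor <;> intro hx <;> linarith
    have key : (fun x => (H.indicator fun z => ENNReal.ofReal (ind A (z + h))) (x + -h))
        = Hh.indicator fun z => ENNReal.ofReal (ind A z) := by
      funext x
      by_cases hx : x ∈ Hh
      · rw [Set.indicator_of_mem ((hmem x).2 hx), Set.indicator_of_mem hx]
        congr 1
        rw [add_assoc, neg_add_cancel, add_zero]
      · rw [Set.indicator_of_notMem (fun hc => hx ((hmem x).1 hc)),
          Set.indicator_of_notMem hx]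
    calc ∫⁻ x in H, ENNReal.ofReal (ind A (x + h))
        = ∫⁻ x, (H.indicator fun z => ENNReal.ofReal (ind A (z + h))) x := by
          rw [lintegral_indicator hmH]
      _ = ∫⁻ x, (H.indicator fun z => ENNReal.ofReal (ind A (z + h))) (x + -h) := by
          rw [lintegral_add_right_eq_self]
      _ = ∫⁻ x, Hh.indicator (fun z => ENNReal.ofReal (ind A z)) x := by rw [key]
      _ = ∫⁻ x in Hh, ENNReal.ofReal (ind A x) := by rw [lintegral_indicator hmHh]
      _ = volume (A ∩ Hh) := by
          rw [ofReal_ind A]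
          have := lintegral_indicator_one (μ := volume.restrict Hh) hA
          rw [Measure.restrict_apply hA] at this
          exact this
  have hmf : Measurable fun x : E N => ENNReal.ofReal |ind A x - ind A (x + h)| := by
    have hmi : Measurable (ind A) := measurable_const.indicator hA
    exact ((hmi.sub (hmi.comp (measurable_add_const h))).abs).ennreal_ofReal
  have c3 : volume (A ∩ H) ≤
      (∫⁻ x in H, ENNReal.ofReal |ind A x - ind A (x + h)|) + volume (A ∩ Hh) := by
    rw [← c1, ← c2, ← lintegral_add_left (μ := volume.restrict H) hmf]
    apply lintegral_mono
    intro x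
    have hpt : ind A x ≤ |ind A x - ind A (x + h)| + ind A (x + h) := by
      have := le_abs_self (ind A x - ind A (x + h))
      linarith
    calc ENNReal.ofReal (ind A x)
        ≤ ENNReal.ofReal (|ind A x - ind A (x + h)| + ind A (x + h)) :=
          ENNReal.ofReal_le_ofReal hpt
      _ = _ := ENNReal.ofReal_add (abs_nonneg _) (ind_nonneg A _)
  have c5 : volume (A ∩ S k) + volume (A ∩ Hh) = volume (A ∩ H) := by
    rw [← measure_union ?_ (hA.inter hmHh)]
    · congr 1
      ext x
      simp only [hSdef, hHdef, hHhdef, Set.mem_union, Set.mem_inter_iff, Set.mem_preimage,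
        Set.mem_Ioc, Set.mem_Ioi]
      constructor
      · rintro (⟨hxA, h1, h2⟩ | ⟨hxA, h1⟩)
        · exact ⟨hxA, h1⟩
        · refine ⟨hxA, ?_⟩
          have : β + k*δ < β + (k+1)*δ := by nlinarith
          linarith
      · rintro ⟨hxA, h1⟩
        rcases le_or_gt ⟪e, x⟫ (β + (k+1)*δ) with h2 | h2
        · exact Or.inl ⟨hxA, h1, h2⟩
        · exact Or.inr ⟨hxA, h2⟩
    · rw [Set.disjoint_left]
      rintro x ⟨-, -, h2⟩ ⟨-, h3⟩
      exact absurd h3 (not_lt.2 h2)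
  have c6 : volume (A ∩ S k) ≤ ∫⁻ x in H, ENNReal.ofReal |ind A x - ind A (x + h)| := by
    have hfin2 : volume (A ∩ Hh) ≠ ⊤ :=
      (lt_of_le_of_lt (measure_mono Set.inter_subset_left) (lt_top_iff_ne_top.2 hfin)).ne
    have := c5.le.trans c3
    exact (ENNReal.add_le_add_iff_right hfin2).1 this
  -- combine
  have hinvK : ENNReal.ofReal (δ / 4) ≤ ((K : ℝ≥0∞))⁻¹ := by
    have h1 : (K : ℝ≥0∞) ≤ ENNReal.ofReal (4 / δ) := by
      rw [← ENNReal.ofReal_natCast]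
      exact ENNReal.ofReal_le_ofReal hKle
    have h2 : (ENNReal.ofReal (4 / δ))⁻¹ ≤ ((K : ℝ≥0∞))⁻¹ := ENNReal.inv_le_inv' h1
    have h3 : (ENNReal.ofReal (4 / δ))⁻¹ = ENNReal.ofReal (δ / 4) := by
      rw [← ENNReal.ofReal_inv_of_pos (by positivity), inv_div]
    rw [← h3]; exact h2
  calc M * ENNReal.ofReal (δ / 4) ≤ M * ((K : ℝ≥0∞))⁻¹ := mul_le_mul_right hinvK M
    _ = M / K := by rw [div_eq_mul_inv]
    _ ≤ volume (A ∩ S k) := hk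
    _ ≤ ∫⁻ x in H, ENNReal.ofReal |ind A x - ind A (x + h)| := c6
    _ ≤ ∫⁻ x, ENNReal.ofReal |ind A x - ind A (x + h)| := setLIntegral_le_lintegral _ _


lemma measurable_kernel (A : Set (E N)) (hA : MeasurableSet A) (a : ℝ) (haN : 0 ≤ (N : ℝ) + a) :
    Measurable fun z : E N × E N =>
      ENNReal.ofReal (|ind A z.1 - ind A z.2| / ‖z.1 - z.2‖ ^ ((N : ℝ) + a)) := by
  have hmi : Measurable (ind A) := measurable_const.indicator hA
  apply Measurable.ennreal_ofReal
  apply Measurable.div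
  · exact ((hmi.comp measurable_fst).sub (hmi.comp measurable_snd)).abs
  · exact ((continuous_fst.sub continuous_snd).norm.rpow_const fun x => Or.inr haN).measurable

lemma dblJ_eq_top (hN : N ≠ 0) (A : Set (E N)) (hA : MeasurableSet A)
    (h0 : volume A ≠ 0) (hfin : volume A ≠ ⊤) {a : ℝ} (ha : 1 ≤ a) :
    (∫⁻ x, ∫⁻ y, ENNReal.ofReal (|ind A x - ind A y| / ‖x - y‖ ^ ((N : ℝ) + a))) = ⊤ := by
  have haN : 0 ≤ (N : ℝ) + a := by positivity
  -- find a ball of radius 1 with positive mass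
  obtain ⟨x₀, hM0⟩ : ∃ x₀ : E N, volume (A ∩ closedBall x₀ 1) ≠ 0 := by
    obtain ⟨D, hDc, hDd⟩ := TopologicalSpace.exists_countable_dense (E N)
    by_contra hcon
    push_neg at hcon
    apply h0
    have hsub : A ⊆ ⋃ d ∈ D, A ∩ closedBall d 1 := by
      intro x hx
      obtain ⟨d, hdD, hdist⟩ := hDd.exists_dist_lt x one_pos
      exact Set.mem_biUnion hdD ⟨hx, mem_closedBall.2 hdist.le⟩
    refine measure_mono_null hsub ?_
    exact (measure_biUnion_null_iff hDc).2 fun d _ => hcon d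
  set M : ℝ≥0∞ := volume (A ∩ closedBall x₀ 1) with hMdef
  set vb : ℝ≥0∞ := volume (ball (0 : E N) 1) with hvbdef
  have hvb0 : vb ≠ 0 := (measure_ball_pos volume 0 one_pos).ne'
  -- the annuli
  set r : ℕ → ℝ := fun k => (2:ℝ)⁻¹ ^ k with hrdef
  have hr0 : ∀ k, 0 < r k := fun k => pow_pos (by norm_num) k
  have hr1 : ∀ k, r k ≤ 1 := fun k => pow_le_one₀ (by norm_num) (by norm_num)
  have hrsucc : ∀ k, r (k + 1) = r k * 2⁻¹ := fun k => pow_succ _ _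
  have hranti : ∀ {j k : ℕ}, j ≤ k → r k ≤ r j := fun {j k} hjk =>
    pow_le_pow_of_le_one (by norm_num) (by norm_num) hjk
  set Ann : ℕ → Set (E N) := fun k => closedBall (0 : E N) (r k) \ closedBall 0 (r (k+1))
    with hAnndef
  have hmAnn : ∀ k, MeasurableSet (Ann k) :=
    fun k => measurableSet_closedBall.diff measurableSet_closedBall
  have hAnnmem : ∀ k h, h ∈ Ann k → r (k+1) < ‖h‖ ∧ ‖h‖ ≤ r k := by
    intro k h hh
    obtain ⟨h1, h2⟩ := hh
    rw [mem_closedBall_zero_iff] at h1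
    rw [mem_closedBall_zero_iff] at h2
    push_neg at h2
    exact ⟨h2, h1⟩
  have hdisj : Pairwise (Function.onFun Disjoint Ann) := by
    intro i j hij
    wlog hlt : i < j generalizing i j
    · exact (this hij.symm (by omega)).symm
    rw [Function.onFun, Set.disjoint_left]
    intro h hi hj
    obtain ⟨hi1, hi2⟩ := hAnnmem i h hi
    obtain ⟨hj1, hj2⟩ := hAnnmem j h hj
    have : r j ≤ r (i + 1) := hranti (by omega)
    linarith
  -- kernel and change of variables
  set g : E N × E N → ℝ≥0∞ := fun z =>
    ENNReal.ofReal (|ind A z.1 - ind A z.2| / ‖z.1 - z.2‖ ^ ((N : ℝ) + a)) with hgdef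
  have hmg : Measurable g := measurable_kernel A hA a haN
  have step1 : (∫⁻ x, ∫⁻ y, g (x, y)) = ∫⁻ x, ∫⁻ h, g (x, x + h) := by
    refine lintegral_congr fun x => ?_
    exact (lintegral_add_left_eq_self (fun y => g (x, y)) x).symm
  have step2 : (∫⁻ x, ∫⁻ h, g (x, x + h)) = ∫⁻ h, ∫⁻ x, g (x, x + h) := by
    apply lintegral_lintegral_swap
    exact (hmg.comp ((measurable_fst.prodMk (measurable_fst.add measurable_snd)))).aemeasurable
  -- lower bound for the inner integral, for h in the k-th annulus
  have inner_bound : ∀ k, ∀ h ∈ Ann k,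
      M * ENNReal.ofReal (r (k+1) / 4) * (ENNReal.ofReal (r k ^ ((N:ℝ) + a)))⁻¹ ≤
        ∫⁻ x, g (x, x + h) := by
    intro k h hh
    obtain ⟨hr1', hr2'⟩ := hAnnmem k h hh
    have hhne : h ≠ 0 := by
      intro hc
      rw [hc, norm_zero] at hr1'
      exact absurd hr1' (not_lt.2 (hr0 (k+1)).le)
    have hnorm_pos : 0 < ‖h‖ := norm_pos_iff.2 hhne
    have hpow_pos : 0 < ‖h‖ ^ ((N:ℝ) + a) := Real.rpow_pos_of_pos hnorm_pos _
    have hkey : ∀ x, g (x, x + h) =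
        ENNReal.ofReal |ind A x - ind A (x + h)| * (ENNReal.ofReal (‖h‖ ^ ((N:ℝ) + a)))⁻¹ := by
      intro x
      have : x - (x + h) = -h := by abel
      rw [hgdef]
      simp only [this, norm_neg]
      rw [div_eq_mul_inv, ENNReal.ofReal_mul (abs_nonneg _),
        ENNReal.ofReal_inv_of_pos hpow_pos]
    calc M * ENNReal.ofReal (r (k+1) / 4) * (ENNReal.ofReal (r k ^ ((N:ℝ) + a)))⁻¹
        ≤ M * ENNReal.ofReal (‖h‖ / 4) * (ENNReal.ofReal (‖h‖ ^ ((N:ℝ) + a)))⁻¹ := by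
          apply mul_le_mul'
          · exact mul_le_mul_right (ENNReal.ofReal_le_ofReal (by linarith)) M
          · apply ENNReal.inv_le_inv'
            apply ENNReal.ofReal_le_ofReal
            exact Real.rpow_le_rpow (norm_nonneg h) hr2' haN
      _ ≤ (∫⁻ x, ENNReal.ofReal |ind A x - ind A (x + h)|) *
            (ENNReal.ofReal (‖h‖ ^ ((N:ℝ) + a)))⁻¹ := by
          apply mul_le_mul_left
          exact slab A hA hfin x₀ hhne (le_trans hr2' (hr1 k))
      _ = ∫⁻ x, ENNReal.ofReal |ind A x - ind A (x + h)| *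
            (ENNReal.ofReal (‖h‖ ^ ((N:ℝ) + a)))⁻¹ := by
          rw [lintegral_mul_const]
          have hmi : Measurable (ind A) := measurable_const.indicator hA
          exact ((hmi.sub (hmi.comp (measurable_add_const h))).abs).ennreal_ofReal
      _ = ∫⁻ x, g (x, x + h) := by
          refine lintegral_congr fun x => ?_
          rw [hkey x]
  -- volume of annuli
  have hball : ∀ ρ : ℝ, 0 ≤ ρ →
      volume (closedBall (0 : E N) ρ) = ENNReal.ofReal (ρ ^ N) * vb := by
    intro ρ hρ
    rw [Measure.addHaar_closedBall volume 0 hρ, finrank_euclideanSpace_fin]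
  have hvolAnn : ∀ k, ENNReal.ofReal (r k ^ N / 2) * vb ≤ volume (Ann k) := by
    intro k
    have hsub : closedBall (0 : E N) (r (k+1)) ⊆ closedBall 0 (r k) :=
      closedBall_subset_closedBall (hranti (by omega))
    rw [hAnndef]
    simp only []
    rw [measure_diff hsub measurableSet_closedBall.nullMeasurableSet
      measure_closedBall_lt_top.ne, hball _ (hr0 k).le, hball _ (hr0 (k+1)).le]
    apply ENNReal.le_sub_of_add_le_right
    · exact ENNReal.mul_ne_top ENNReal.ofReal_ne_top
        (measure_ball_lt_top (x := (0 : E N)) (r := 1)).ne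
    · rw [← add_mul, ← ENNReal.ofReal_add (by positivity) (by positivity)]
      apply mul_le_mul_left
      apply ENNReal.ofReal_le_ofReal
      have h1 : r (k+1) ^ N = r k ^ N * 2⁻¹ ^ N := by rw [hrsucc, mul_pow]
      have h2 : (2:ℝ)⁻¹ ^ N ≤ 2⁻¹ := by
        simpa using pow_le_pow_of_le_one (by norm_num : (0:ℝ) ≤ 2⁻¹) (by norm_num)
          (Nat.one_le_iff_ne_zero.2 hN)
      have h3 : 0 < r k ^ N := pow_pos (hr0 k) N
      nlinarith
  -- each annulus contributes at least a fixed amount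
  have ann_bound : ∀ k, M * vb * ENNReal.ofReal (1/16) ≤
      ∫⁻ h in Ann k, ∫⁻ x, g (x, x + h) := by
    intro k
    have hrpowpos : 0 < r k ^ ((N:ℝ) + a) := Real.rpow_pos_of_pos (hr0 k) _
    have key : ENNReal.ofReal (1/16) ≤
        ENNReal.ofReal (r (k+1) / 4) * (ENNReal.ofReal (r k ^ ((N:ℝ) + a)))⁻¹ *
          ENNReal.ofReal (r k ^ N / 2) := by
      rw [← ENNReal.ofReal_inv_of_pos hrpowpos, ← ENNReal.ofReal_mul (by positivity),
        ← ENNReal.ofReal_mul (by positivity)]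
      apply ENNReal.ofReal_le_ofReal
      have e1 : r k ^ ((N:ℝ) + a) ≤ r k ^ N * r k := by
        calc r k ^ ((N:ℝ) + a) ≤ r k ^ ((N:ℝ) + 1) :=
              Real.rpow_le_rpow_of_exponent_ge (hr0 k) (hr1 k) (by linarith)
          _ = r k ^ N * r k := by
              rw [Real.rpow_add (hr0 k), Real.rpow_natCast, Real.rpow_one]
      have e2 : (r k ^ N * r k)⁻¹ ≤ (r k ^ ((N:ℝ) + a))⁻¹ :=
        inv_anti₀ hrpowpos e1
      have h8 : r (k+1) / 4 = r k / 8 := by rw [hrsucc]; ring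
      have hq : 0 < r k ^ N := pow_pos (hr0 k) N
      calc (1:ℝ)/16 = r k / 8 * (r k ^ N * r k)⁻¹ * (r k ^ N / 2) := by
            field_simp
            rw [mul_div_assoc, div_self (hr0 k).ne']; norm_num
        _ ≤ r k / 8 * (r k ^ ((N:ℝ) + a))⁻¹ * (r k ^ N / 2) := by
            apply mul_le_mul_of_nonneg_right
              (mul_le_mul_of_nonneg_left e2 (by positivity)) (by positivity)
        _ = r (k+1) / 4 * (r k ^ ((N:ℝ) + a))⁻¹ * (r k ^ N / 2) := by rw [h8]
    calc M * vb * ENNReal.ofReal (1/16)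
        ≤ M * (ENNReal.ofReal (r (k+1) / 4) * (ENNReal.ofReal (r k ^ ((N:ℝ) + a)))⁻¹ *
            ENNReal.ofReal (r k ^ N / 2)) * vb := by
          calc M * vb * ENNReal.ofReal (1/16) = M * ENNReal.ofReal (1/16) * vb := by ring
            _ ≤ _ := by
                apply mul_le_mul_left
                exact mul_le_mul_right key M
      _ = (M * ENNReal.ofReal (r (k+1) / 4) * (ENNReal.ofReal (r k ^ ((N:ℝ) + a)))⁻¹) *
            (ENNReal.ofReal (r k ^ N / 2) * vb) := by ring
      _ ≤ (M * ENNReal.ofReal (r (k+1) / 4) * (ENNReal.ofReal (r k ^ ((N:ℝ) + a)))⁻¹) *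
            volume (Ann k) := mul_le_mul_right (hvolAnn k) _
      _ = ∫⁻ _ in Ann k,
            M * ENNReal.ofReal (r (k+1) / 4) * (ENNReal.ofReal (r k ^ ((N:ℝ) + a)))⁻¹ :=
          (setLIntegral_const _ _).symm
      _ ≤ ∫⁻ h in Ann k, ∫⁻ x, g (x, x + h) :=
          setLIntegral_mono' (hmAnn k) (fun h hh => inner_bound k h hh)
  -- summing up
  have hconst_ne : M * vb * ENNReal.ofReal (1/16) ≠ 0 :=
    mul_ne_zero (mul_ne_zero hM0 hvb0) (ENNReal.ofReal_pos.2 (by norm_num)).ne'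
  have htop : (⊤ : ℝ≥0∞) ≤ ∫⁻ h, ∫⁻ x, g (x, x + h) := by
    calc (⊤ : ℝ≥0∞) = ∑' (_ : ℕ), M * vb * ENNReal.ofReal (1/16) :=
          (ENNReal.tsum_const_eq_top_of_ne_zero hconst_ne).symm
      _ ≤ ∑' k, ∫⁻ h in Ann k, ∫⁻ x, g (x, x + h) := ENNReal.tsum_le_tsum ann_bound
      _ = ∫⁻ h in ⋃ k, Ann k, ∫⁻ x, g (x, x + h) := (lintegral_iUnion hmAnn hdisj _).symm
      _ ≤ ∫⁻ h, ∫⁻ x, g (x, x + h) := setLIntegral_le_lintegral _ _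
  have : (∫⁻ x, ∫⁻ y, g (x, y)) = ⊤ := by
    rw [step1, step2]
    exact top_le_iff.1 htop
  exact this

end IndSharp2

set_option maxHeartbeats 2000000 in
open IndSharp2 in
/-- Assuming the sharp `L²`-based Sobolev inequality for Gagliardo seminorms, the
corresponding inequality holds for characteristic functions in `W^{s,p}`, with a
constant depending only on `p` and the constant `C₀` of the `L²`-assumption. -/
theorem indicator_sharp_sobolev (p C₀ : ℝ) (hp : 1 < p) (hC₀ : 0 < C₀) :
    ∃ C : ℝ, 0 < C ∧
      ∀ (N : ℕ) (A : Set (EuclideanSpace ℝ (Fin N))), MeasurableSet A →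
      ∀ s t : ℝ, 0 < s → s ≤ t → t < 1 → s * p / 2 < 1 → t * p / 2 < 1 →
      (∀ σ τ : ℝ, 0 < σ → σ ≤ τ → τ < 1 →
        ∀ g : EuclideanSpace ℝ (Fin N) → ℝ, MemLp g 2 volume →
          ENNReal.ofReal (min σ (1 - σ) ^ ((1 : ℝ)/2)) * gagliardoSeminorm N σ 2 g ≤
            ENNReal.ofReal C₀ * (eLpNorm g 2 volume +
              ENNReal.ofReal (min τ (1 - τ) ^ ((1 : ℝ)/2)) * gagliardoSeminorm N τ 2 g)) →
      ENNReal.ofReal (min s (1 - s) ^ (1/p)) *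
          gagliardoSeminorm N s p (Set.indicator A fun _ => (1 : ℝ)) ≤
        ENNReal.ofReal C *
          (eLpNorm (Set.indicator A fun _ => (1 : ℝ)) (ENNReal.ofReal p) volume +
            ENNReal.ofReal (min t (1 - t) ^ (1/p)) *
              gagliardoSeminorm N t p (Set.indicator A fun _ => (1 : ℝ))) := by
  have hp0 : 0 < p := lt_trans one_pos hp
  have hp0' : p ≠ 0 := hp0.ne'
  have h1p : 0 < 1/p := by positivity
  have h2p : (0:ℝ) ≤ 2/p := by positivity
  set Kr : ℝ := max (max (p/2) (p/(2*(p-1)))) 1 with hKrdef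
  have hKr1 : 1 ≤ Kr := le_max_right _ _
  set C : ℝ := 2 ^ (1/p) * (C₀ ^ (2/p) * (2 ^ (2/p) * Kr ^ (1/p))) with hCdef
  have hCpos : 0 < C := by positivity
  have hCne : ENNReal.ofReal C ≠ 0 := (ENNReal.ofReal_pos.2 hCpos).ne'
  refine ⟨C, hCpos, ?_⟩
  intro N A hA s t hs hst ht1 hsp2 htp2 Hyp
  have hind : (Set.indicator A fun _ => (1:ℝ)) = ind A := rfl
  rw [hind]
  have ht0 : 0 < t := lt_of_lt_of_le hs hst
  have hmt0 : 0 < min t (1 - t) := lt_min ht0 (by linarith)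
  -- Case N = 0
  by_cases hN : N = 0
  · subst hN
    have hzero : gagliardoSeminorm 0 s p (ind A) = 0 := by
      unfold gagliardoSeminorm
      have hinteg : ∀ x y : E 0,
          ENNReal.ofReal (|ind A x - ind A y| ^ p / ‖x - y‖ ^ ((0:ℕ) + s * p : ℝ)) = 0 := by
        intro x y
        have hxy : x = y := Subsingleton.elim x y
        rw [hxy, sub_self, abs_zero, Real.zero_rpow hp0', zero_div, ENNReal.ofReal_zero]
      calc (∫⁻ x : E 0, ∫⁻ y : E 0,
            ENNReal.ofReal (|ind A x - ind A y| ^ p / ‖x - y‖ ^ (((0:ℕ):ℝ) + s * p))) ^ (1/p)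
          = (∫⁻ _ : E 0, ∫⁻ _ : E 0, (0:ℝ≥0∞)) ^ (1/p) := by
            congr 1
            exact lintegral_congr fun x => lintegral_congr fun y => hinteg x y
        _ = 0 := by
            simp only [lintegral_zero]
            exact ENNReal.zero_rpow_of_pos h1p
    rw [hzero, mul_zero]
    exact zero_le
  -- Case volume A = ∞
  by_cases hAtop : volume A = ⊤
  · have hPne : (ENNReal.ofReal p) ≠ 0 := (ENNReal.ofReal_pos.2 hp0).ne'
    have hnP : eLpNorm (ind A) (ENNReal.ofReal p) volume = ⊤ := by
      rw [show ind A = (Set.indicator A fun _ => (1:ℝ)) from rfl,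
        eLpNorm_indicator_const hA hPne ENNReal.ofReal_ne_top]
      rw [hAtop, ENNReal.toReal_ofReal hp0.le, ENNReal.top_rpow_of_pos h1p]
      simp
    rw [hnP, top_add, ENNReal.mul_top hCne]
    exact le_top
  -- Case volume A = 0
  by_cases hA0 : volume A = 0
  · have hae : ∀ᵐ z : E N, z ∉ A := measure_eq_zero_iff_ae_notMem.1 hA0
    have hzero : gagliardoSeminorm N s p (ind A) = 0 := by
      rw [gag_eq_dblJ A hp0']
      have hJ : dblJ N A (s * p) = 0 := by
        unfold dblJ
        have houter : ∀ᵐ x : E N, (∫⁻ y,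
            ENNReal.ofReal (|ind A x - ind A y| / ‖x - y‖ ^ ((N:ℝ) + s * p))) = 0 := by
          filter_upwards [hae] with x hx
          have hin : ∀ᵐ y : E N,
              ENNReal.ofReal (|ind A x - ind A y| / ‖x - y‖ ^ ((N:ℝ) + s * p)) = 0 := by
            filter_upwards [hae] with y hy
            have : ind A x = 0 := Set.indicator_of_notMem hx _
            have h2 : ind A y = 0 := Set.indicator_of_notMem hy _
            rw [this, h2, sub_self, abs_zero, zero_div, ENNReal.ofReal_zero]
          rw [lintegral_congr_ae hin, lintegral_zero]
        rw [lintegral_congr_ae houter, lintegral_zero]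
      rw [hJ, ENNReal.zero_rpow_of_pos h1p]
    rw [hzero, mul_zero]
    exact zero_le
  -- main split
  by_cases htp1 : t * p ≤ 1
  · -- good case: apply the hypothesis with σ = sp/2, τ = tp/2
    have hsp1 : s * p ≤ 1 := le_trans (by nlinarith) htp1
    set σ := s * p / 2 with hσdef
    set τ := t * p / 2 with hτdef
    have hσpos : 0 < σ := by rw [hσdef]; positivity
    have hστ : σ ≤ τ := by rw [hσdef, hτdef]; nlinarith
    have hσhalf : σ ≤ 1/2 := by rw [hσdef]; linarith
    have hτhalf : τ ≤ 1/2 := by rw [hτdef]; linarith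
    have hmσ : min σ (1 - σ) = σ := min_eq_left (by linarith)
    have hmτ : min τ (1 - τ) = τ := min_eq_left (by linarith)
    have hσ0' : (0:ℝ) ≤ min σ (1 - σ) := by rw [hmσ]; positivity
    have hτ0' : (0:ℝ) ≤ min τ (1 - τ) := by rw [hmτ]; rw [hτdef]; positivity
    have hmem : MemLp (ind A) 2 volume := memLp_indicator_const 2 hA 1 (Or.inr hAtop)
    have hyp1 := Hyp σ τ hσpos hστ htp2 (ind A) hmem
    have h2ne : (2:ℝ) ≠ 0 := two_ne_zero
    rw [gag_eq_dblJ A h2ne, gag_eq_dblJ A h2ne,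
      show σ * 2 = s * p by rw [hσdef]; ring,
      show τ * 2 = t * p by rw [hτdef]; ring] at hyp1
    set n2 := eLpNorm (ind A) 2 volume with hn2def
    -- raise the hypothesis inequality to the power 2/p
    replace hyp1 := ENNReal.rpow_le_rpow hyp1 h2p
    rw [ENNReal.mul_rpow_of_nonneg _ _ h2p, ← ENNReal.rpow_mul,
      ENNReal.ofReal_rpow_of_nonneg (Real.rpow_nonneg hσ0' _) h2p,
      ← Real.rpow_mul hσ0',
      show (1:ℝ)/2 * (2/p) = 1/p by field_simp] at hyp1
    rw [ENNReal.mul_rpow_of_nonneg _ _ h2p,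
      ENNReal.ofReal_rpow_of_nonneg hC₀.le h2p] at hyp1
    -- split the sum on the right
    have hTsplit := add_rpow_le n2
      (ENNReal.ofReal (min τ (1 - τ) ^ ((1:ℝ)/2)) * dblJ N A (t * p) ^ ((1:ℝ)/2)) h2p
    have hT : (ENNReal.ofReal (min τ (1 - τ) ^ ((1:ℝ)/2)) * dblJ N A (t * p) ^ ((1:ℝ)/2))
          ^ ((2:ℝ)/p)
        = ENNReal.ofReal (min τ (1 - τ) ^ (1/p)) * dblJ N A (t * p) ^ (1/p) := by
      rw [ENNReal.mul_rpow_of_nonneg _ _ h2p, ← ENNReal.rpow_mul,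
        ENNReal.ofReal_rpow_of_nonneg (Real.rpow_nonneg hτ0' _) h2p,
        ← Real.rpow_mul hτ0',
        show (1:ℝ)/2 * (2/p) = 1/p by field_simp]
    have hn2p : n2 ^ ((2:ℝ)/p) = eLpNorm (ind A) (ENNReal.ofReal p) volume := by
      have e2 : n2 = volume A ^ (1/(2:ℝ≥0∞).toReal) := by
        rw [hn2def, show ind A = (Set.indicator A fun _ => (1:ℝ)) from rfl,
          eLpNorm_indicator_const hA two_ne_zero ENNReal.ofNat_ne_top]
        simp
      have eP : eLpNorm (ind A) (ENNReal.ofReal p) volume = volume A ^ (1/p) := by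
        rw [show ind A = (Set.indicator A fun _ => (1:ℝ)) from rfl,
          eLpNorm_indicator_const hA (ENNReal.ofReal_pos.2 hp0).ne' ENNReal.ofReal_ne_top,
          ENNReal.toReal_ofReal hp0.le]
        simp
      rw [e2, eP, ← ENNReal.rpow_mul]
      congr 1
      rw [ENNReal.toReal_ofNat]
      field_simp
    -- comparison of the minima
    have hms : min s (1 - s) ≤ 2 * min σ (1 - σ) := by
      rw [hmσ, hσdef]
      calc min s (1-s) ≤ s := min_le_left _ _
        _ ≤ 2 * (s*p/2) := by nlinarith
    have hmτt : min τ (1 - τ) ≤ Kr * min t (1 - t) := by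
      rw [hmτ, hτdef]
      rcases le_total t (1/2) with h | h
      · rw [min_eq_left (by linarith)]
        have hKra : p/2 ≤ Kr := le_trans (le_max_left _ _) (le_max_left _ _)
        nlinarith
      · rw [min_eq_right (by linarith)]
        have hKr2 : p/(2*(p-1)) ≤ Kr := le_trans (le_max_right _ _) (le_max_left _ _)
        have hp1 : 0 < p - 1 := by linarith
        have ht1p : t ≤ 1/p := (le_div_iff₀ hp0).2 htp1
        have hfrac : (p-1)/p ≤ 1 - t := by
          have : (p-1)/p = 1 - 1/p := by field_simp
          linarith
        have hhalf : p/(2*(p-1)) * ((p-1)/p) = 1/2 := by field_simp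
        calc t*p/2 ≤ 1/2 := by linarith
          _ = p/(2*(p-1)) * ((p-1)/p) := hhalf.symm
          _ ≤ p/(2*(p-1)) * (1 - t) :=
              mul_le_mul_of_nonneg_left hfrac (by positivity)
          _ ≤ Kr * (1 - t) := mul_le_mul_of_nonneg_right hKr2 (by linarith)
    -- rewrite the goal
    rw [gag_eq_dblJ A hp0', gag_eq_dblJ A hp0']
    have hkk1 : (1:ℝ≥0∞) ≤ ENNReal.ofReal (Kr ^ (1/p)) := by
      rw [show (1:ℝ≥0∞) = ENNReal.ofReal 1 by simp]
      apply ENNReal.ofReal_le_ofReal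
      calc (1:ℝ) = 1 ^ (1/p) := (Real.one_rpow _).symm
        _ ≤ Kr ^ (1/p) := Real.rpow_le_rpow zero_le_one hKr1 (by positivity)
    have hstep : ENNReal.ofReal (min τ (1 - τ) ^ (1/p)) * dblJ N A (t * p) ^ (1/p) ≤
        ENNReal.ofReal (Kr ^ (1/p)) *
          (ENNReal.ofReal (min t (1 - t) ^ (1/p)) * dblJ N A (t * p) ^ (1/p)) := by
      rw [← mul_assoc, ← ENNReal.ofReal_mul (by positivity)]
      apply mul_le_mul_left
      apply ENNReal.ofReal_le_ofReal
      calc min τ (1-τ) ^ (1/p) ≤ (Kr * min t (1-t)) ^ (1/p) :=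
            Real.rpow_le_rpow hτ0' hmτt (by positivity)
        _ = Kr ^ (1/p) * min t (1-t) ^ (1/p) :=
            Real.mul_rpow (by linarith) hmt0.le
    have habsorb : eLpNorm (ind A) (ENNReal.ofReal p) volume +
          ENNReal.ofReal (min τ (1 - τ) ^ (1/p)) * dblJ N A (t * p) ^ (1/p) ≤
        ENNReal.ofReal (Kr ^ (1/p)) *
          (eLpNorm (ind A) (ENNReal.ofReal p) volume +
            ENNReal.ofReal (min t (1 - t) ^ (1/p)) * dblJ N A (t * p) ^ (1/p)) := by
      rw [mul_add]
      exact add_le_add (le_mul_of_one_le_left' hkk1) hstep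
    calc ENNReal.ofReal (min s (1 - s) ^ (1/p)) * dblJ N A (s * p) ^ (1/p)
        ≤ (ENNReal.ofReal (2 ^ (1/p)) * ENNReal.ofReal (min σ (1 - σ) ^ (1/p))) *
            dblJ N A (s * p) ^ (1/p) := by
          apply mul_le_mul_left
          rw [← ENNReal.ofReal_mul (by positivity)]
          apply ENNReal.ofReal_le_ofReal
          calc min s (1-s) ^ (1/p) ≤ (2 * min σ (1-σ)) ^ (1/p) :=
                Real.rpow_le_rpow (le_min (by linarith) (by linarith)) hms (by positivity)
            _ = 2 ^ (1/p) * min σ (1-σ) ^ (1/p) := Real.mul_rpow (by norm_num) hσ0'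
      _ = ENNReal.ofReal (2 ^ (1/p)) *
            (ENNReal.ofReal (min σ (1 - σ) ^ (1/p)) * dblJ N A (s * p) ^ (1/p)) := by
          rw [mul_assoc]
      _ ≤ ENNReal.ofReal (2 ^ (1/p)) * (ENNReal.ofReal (C₀ ^ (2/p)) *
            ((n2 + ENNReal.ofReal (min τ (1 - τ) ^ ((1:ℝ)/2)) *
              dblJ N A (t * p) ^ ((1:ℝ)/2)) ^ ((2:ℝ)/p))) :=
          mul_le_mul_right hyp1 _
      _ ≤ ENNReal.ofReal (2 ^ (1/p)) * (ENNReal.ofReal (C₀ ^ (2/p)) *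
            (ENNReal.ofReal (2 ^ ((2:ℝ)/p)) *
              (n2 ^ ((2:ℝ)/p) + (ENNReal.ofReal (min τ (1 - τ) ^ ((1:ℝ)/2)) *
                dblJ N A (t * p) ^ ((1:ℝ)/2)) ^ ((2:ℝ)/p)))) :=
          mul_le_mul_right (mul_le_mul_right hTsplit _) _
      _ = ENNReal.ofReal (2 ^ (1/p)) * (ENNReal.ofReal (C₀ ^ (2/p)) *
            (ENNReal.ofReal (2 ^ ((2:ℝ)/p)) *
              (eLpNorm (ind A) (ENNReal.ofReal p) volume +
                ENNReal.ofReal (min τ (1 - τ) ^ (1/p)) * dblJ N A (t * p) ^ (1/p)))) := by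
          rw [hT, hn2p]
      _ ≤ ENNReal.ofReal (2 ^ (1/p)) * (ENNReal.ofReal (C₀ ^ (2/p)) *
            (ENNReal.ofReal (2 ^ ((2:ℝ)/p)) * (ENNReal.ofReal (Kr ^ (1/p)) *
              (eLpNorm (ind A) (ENNReal.ofReal p) volume +
                ENNReal.ofReal (min t (1 - t) ^ (1/p)) * dblJ N A (t * p) ^ (1/p))))) :=
          mul_le_mul_right (mul_le_mul_right (mul_le_mul_right habsorb _) _) _
      _ = ENNReal.ofReal C *
            (eLpNorm (ind A) (ENNReal.ofReal p) volume +
              ENNReal.ofReal (min t (1 - t) ^ (1/p)) * dblJ N A (t * p) ^ (1/p)) := by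
          rw [hCdef, ENNReal.ofReal_mul (by positivity), ENNReal.ofReal_mul (by positivity),
            ENNReal.ofReal_mul (by positivity)]
          ring
  · -- t*p > 1 : the W^{t,p} seminorm of the indicator is infinite
    push_neg at htp1
    have hJt : dblJ N A (t * p) = ⊤ := by
      unfold dblJ
      exact dblJ_eq_top hN A hA hA0 hAtop htp1.le
    have hgagt : gagliardoSeminorm N t p (ind A) = ⊤ := by
      rw [gag_eq_dblJ A hp0', hJt, ENNReal.top_rpow_of_pos h1p]
    have hmtne : ENNReal.ofReal (min t (1 - t) ^ (1/p)) ≠ 0 :=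
      (ENNReal.ofReal_pos.2 (Real.rpow_pos_of_pos hmt0 _)).ne'
    rw [hgagt, ENNReal.mul_top hmtne, add_top, ENNReal.mul_top hCne]
    exact le_top
end

section
/- Let p ∈ [2,∞), s ∈ (0,1), and let (a_ℓ)_{ℓ∈ℤ} be nonnegative reals with S := ∑_{ℓ∈ℤ} 2^{2ℓs} a_ℓ^2 < ∞. Then ∑_{k∈ℤ} (∑_{j≥0} 2^{2ks} a_{k+j}^2)^{p/2} ≤ C s^{-1} S^{p/2} for a constant C depending only on p. -/
open scoped ENNReal

/-- High-frequency summation lemma for `p ≥ 2`: if `S = ∑_ℓ 2^{2ℓs} a_ℓ² < ∞` then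
`∑_{k∈ℤ} (∑_{j≥0} 2^{2ks} a_{k+j}²)^{p/2} ≤ C s⁻¹ S^{p/2}`. -/
theorem discrete_high_frequency_lemma (p : ℝ) (hp : 2 ≤ p) :
    ∃ C : ℝ, 0 < C ∧ ∀ s : ℝ, 0 < s → s < 1 →
      ∀ a : ℤ → ℝ, (∀ ℓ, 0 ≤ a ℓ) →
        (∑' ℓ : ℤ, ENNReal.ofReal ((2 : ℝ) ^ (2 * (ℓ : ℝ) * s) * a ℓ ^ 2)) ≠ ⊤ →
        ∑' k : ℤ, (∑' j : ℕ, ENNReal.ofReal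
            ((2 : ℝ) ^ (2 * (k : ℝ) * s) * a (k + j) ^ 2)) ^ (p / 2) ≤
          ENNReal.ofReal (C * s⁻¹) *
            (∑' ℓ : ℤ, ENNReal.ofReal ((2 : ℝ) ^ (2 * (ℓ : ℝ) * s) * a ℓ ^ 2)) ^ (p / 2) := by
  refine ⟨3, by norm_num, fun s hs hs1 a ha hS => ?_⟩
  set g : ℤ → ℝ≥0∞ := fun ℓ => ENNReal.ofReal ((2 : ℝ) ^ (2 * (ℓ : ℝ) * s) * a ℓ ^ 2) with hg
  set S : ℝ≥0∞ := ∑' ℓ, g ℓ with hSdef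
  set f : ℤ → ℝ≥0∞ :=
    fun k => ∑' j : ℕ, ENNReal.ofReal ((2 : ℝ) ^ (2 * (k : ℝ) * s) * a (k + j) ^ 2) with hf
  have hq1 : (1:ℝ) ≤ p / 2 := by linarith
  have hq0 : p / 2 ≠ 0 := by positivity
  -- step A : f k ≤ S
  have hfS : ∀ k, f k ≤ S := by
    intro k
    have h1 : f k ≤ ∑' j : ℕ, g (k + j) := by
      refine ENNReal.tsum_le_tsum fun j => ?_
      refine ENNReal.ofReal_le_ofReal ?_
      have : (2 : ℝ) ^ (2 * (k : ℝ) * s) ≤ (2:ℝ) ^ (2 * ((k : ℝ) + j) * s) := by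
        apply Real.rpow_le_rpow_of_exponent_le one_le_two
        nlinarith [Nat.cast_nonneg (α := ℝ) j]
      have := mul_le_mul_of_nonneg_right this (sq_nonneg (a (k + j)))
      simpa [hg] using this
    refine h1.trans ?_
    have hinj : Function.Injective (fun j : ℕ => k + (j : ℤ)) := by
      intro x y hxy
      simpa using hxy
    simpa using ENNReal.tsum_comp_le_tsum_of_injective hinj g
  -- step B : ∑ f k = (∑ j, ofReal (2^(-2js))) * S
  have hr0 : (0:ℝ) < (2:ℝ) ^ (-(2 * s)) := Real.rpow_pos_of_pos two_pos _
  have hsum_f : ∑' k : ℤ, f k = (∑' j : ℕ, ENNReal.ofReal (((2:ℝ) ^ (-(2*s))) ^ j)) * S := by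
    have key : ∀ (k : ℤ) (j : ℕ),
        ENNReal.ofReal ((2 : ℝ) ^ (2 * (k : ℝ) * s) * a (k + j) ^ 2)
          = ENNReal.ofReal (((2:ℝ) ^ (-(2*s))) ^ j) * g (k + j) := by
      intro k j
      rw [hg, ← ENNReal.ofReal_mul (by positivity)]
      congr 1
      have h2 : ((2:ℝ) ^ (-(2*s))) ^ j = (2:ℝ) ^ (-(2*s) * j) := by
        rw [← Real.rpow_natCast ((2:ℝ) ^ (-(2*s))) j, ← Real.rpow_mul (by norm_num)]
      rw [h2, ← mul_assoc, ← Real.rpow_add two_pos]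
      push_cast
      ring_nf
    calc ∑' k : ℤ, f k
        = ∑' (k : ℤ) (j : ℕ), ENNReal.ofReal (((2:ℝ) ^ (-(2*s))) ^ j) * g (k + j) := by
          simp only [hf, key]
      _ = ∑' (j : ℕ) (k : ℤ), ENNReal.ofReal (((2:ℝ) ^ (-(2*s))) ^ j) * g (k + j) :=
          ENNReal.tsum_comm
      _ = ∑' (j : ℕ), ENNReal.ofReal (((2:ℝ) ^ (-(2*s))) ^ j) * ∑' (k : ℤ), g (k + j) := by
          simp only [ENNReal.tsum_mul_left]
      _ = ∑' (j : ℕ), ENNReal.ofReal (((2:ℝ) ^ (-(2*s))) ^ j) * S := by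
          congr 1
          ext j
          congr 1
          exact (Equiv.addRight (j : ℤ)).tsum_eq g
      _ = (∑' j : ℕ, ENNReal.ofReal (((2:ℝ) ^ (-(2*s))) ^ j)) * S := ENNReal.tsum_mul_right
  -- step C : geometric sum bound
  have hgeom : (∑' j : ℕ, ENNReal.ofReal (((2:ℝ) ^ (-(2*s))) ^ j)) ≤ ENNReal.ofReal (3 * s⁻¹) := by
    have hr1 : (2:ℝ) ^ (-(2*s)) < 1 := by
      apply Real.rpow_lt_one_of_one_lt_of_neg one_lt_two
      linarith
    have hkey : s / 3 ≤ 1 - (2:ℝ) ^ (-(2*s)) := by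
      have hlog : (2:ℝ)/3 ≤ Real.log 2 := by
        have := Real.log_two_gt_d9
        linarith
      have hexp : 1 + 2 * s * Real.log 2 ≤ (2:ℝ) ^ (2*s) := by
        have h1 : Real.exp (2 * s * Real.log 2) = (2:ℝ) ^ (2*s) := by
          rw [Real.rpow_def_of_pos two_pos]; ring_nf
        have := Real.add_one_le_exp (2 * s * Real.log 2)
        linarith [h1 ▸ this]
      have hquarter : (1:ℝ)/4 ≤ (2:ℝ) ^ (-(2*s)) := by
        have h1 : (2:ℝ) ^ ((-2:ℤ):ℝ) ≤ (2:ℝ) ^ (-(2*s)) := by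
          apply Real.rpow_le_rpow_of_exponent_le one_le_two
          push_cast; linarith
        have h4 : (2:ℝ) ^ ((-2:ℤ):ℝ) = 1/4 := by
          rw [Real.rpow_intCast]; norm_num
        rw [h4] at h1; exact h1
      have hprod : 1 - (2:ℝ) ^ (-(2*s)) = (2:ℝ) ^ (-(2*s)) * ((2:ℝ) ^ (2*s) - 1) := by
        rw [mul_sub, ← Real.rpow_add two_pos]
        simp
      rw [hprod]
      have h1 : (2:ℝ) ^ (2*s) - 1 ≥ 2 * s * Real.log 2 := by linarith
      have h2 : (2:ℝ) ^ (-(2*s)) * ((2:ℝ) ^ (2*s) - 1) ≥ (1/4) * (2 * s * Real.log 2) := by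
        apply mul_le_mul hquarter h1 (by positivity) (le_of_lt hr0)
      nlinarith
    calc (∑' j : ℕ, ENNReal.ofReal (((2:ℝ) ^ (-(2*s))) ^ j))
        = ENNReal.ofReal (1 - (2:ℝ) ^ (-(2*s)))⁻¹ := by
          rw [← ENNReal.ofReal_tsum_of_nonneg (fun j => by positivity)
            ((summable_geometric_of_lt_one hr0.le hr1))]
          rw [tsum_geometric_of_lt_one hr0.le hr1]
      _ ≤ ENNReal.ofReal (3 * s⁻¹) := by
          apply ENNReal.ofReal_le_ofReal
          rw [inv_le_comm₀ (by linarith) (by positivity)]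
          rw [show ((3:ℝ) * s⁻¹)⁻¹ = s / 3 by field_simp]
          exact hkey
  -- step D : combine
  have hSne : S ≠ ⊤ := hS
  rcases eq_or_ne S 0 with hS0 | hS0
  · have hf0 : ∀ k, f k = 0 := fun k => le_antisymm (hS0 ▸ hfS k) zero_le
    simp only [hf, hSdef] at *
    simp [hf0, hS0, ENNReal.zero_rpow_of_pos (by positivity : (0:ℝ) < p/2)]
  · have hpoint : ∀ k, f k ^ (p/2) ≤ f k * S ^ (p/2 - 1) := by
      intro k
      rcases eq_or_ne (f k) 0 with h0 | h0
      · simp [h0, ENNReal.zero_rpow_of_pos (by positivity : (0:ℝ) < p/2)]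
      · have hfk : f k ≠ ⊤ := (lt_of_le_of_lt (hfS k) hSne.lt_top).ne
        calc f k ^ (p/2) = f k ^ (1 + (p/2 - 1)) := by ring_nf
          _ = f k ^ (1:ℝ) * f k ^ (p/2 - 1) := ENNReal.rpow_add _ _ h0 hfk
          _ ≤ f k * S ^ (p/2 - 1) := by
              rw [ENNReal.rpow_one]
              exact mul_le_mul_right (ENNReal.rpow_le_rpow (hfS k) (by linarith)) _
    calc ∑' k : ℤ, f k ^ (p/2)
        ≤ ∑' k : ℤ, f k * S ^ (p/2 - 1) := ENNReal.tsum_le_tsum hpoint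
      _ = (∑' k : ℤ, f k) * S ^ (p/2 - 1) := ENNReal.tsum_mul_right
      _ = (∑' j : ℕ, ENNReal.ofReal (((2:ℝ) ^ (-(2*s))) ^ j)) * S * S ^ (p/2 - 1) := by
          rw [hsum_f]
      _ ≤ ENNReal.ofReal (3 * s⁻¹) * S * S ^ (p/2 - 1) := by
          gcongr
      _ = ENNReal.ofReal (3 * s⁻¹) * S ^ (p/2) := by
          rw [mul_assoc]
          congr 1
          calc S * S ^ (p/2 - 1) = S ^ (1:ℝ) * S ^ (p/2 - 1) := by rw [ENNReal.rpow_one]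
            _ = S ^ (1 + (p/2 - 1)) := (ENNReal.rpow_add _ _ hS0 hSne).symm
            _ = S ^ (p/2) := by ring_nf
end

section
/- Let p ∈ [2,∞), s ∈ (0,1), and let (a_ℓ)_{ℓ∈ℤ} be nonnegative reals with S := ∑_{ℓ∈ℤ} 2^{2ℓs} a_ℓ^2 < ∞. Then ∑_{k∈ℤ} (∑_{j<0} 2^{2j} 2^{2ks} a_{k+j}^2)^{p/2} ≤ C (1-s)^{-1} S^{p/2} for a constant C depending only on p. -/
open scoped ENNReal

/-!
Writing `2^{2j} 2^{2ks} = 2^{2j(1-s)} 2^{2(k+j)s}`, the inner sum at `k` is a weighted sum of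
shifts of `c ℓ = 2^{2ℓs} a_ℓ²` with weights `w_j = 2^{2j(1-s)} ≤ 1`. Each inner sum is then at
most `S = ∑ c`, so since `p/2 ≥ 1` its `p/2`-th power is at most itself times `S^{p/2-1}`; summing
over `k` and exchanging the sums gives `(∑_{j<0} w_j) S^{p/2}`, and the geometric series
`∑_{j<0} 2^{2j(1-s)}` is at most `(1-s)⁻¹` because `2^{2(1-s)} ≥ 2 - s`; so `C = 1` works.
-/

open Function

namespace ENNReal

theorem rpow_eq_mul_rpow_sub_one (x : ℝ≥0∞) {r : ℝ} (hr : 1 ≤ r) :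
    x ^ r = x * x ^ (r - 1) := by
  conv_lhs => rw [← add_sub_cancel 1 r]
  rw [rpow_add_of_nonneg _ _ zero_le_one (sub_nonneg.2 hr), rpow_one]

theorem rpow_le_mul_rpow_sub_one {x y : ℝ≥0∞} {r : ℝ} (hxy : x ≤ y) (hr : 1 ≤ r) :
    x ^ r ≤ x * y ^ (r - 1) := by
  rw [rpow_eq_mul_rpow_sub_one x hr]
  gcongr

section Shifts

variable {ι G : Type*} [AddGroup G]

theorem tsum_mul_comp_sub_le_tsum {w : ι → ℝ≥0∞} (hw : ∀ i, w i ≤ 1) {n : ι → G}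
    (hn : Injective n) (c : G → ℝ≥0∞) (g : G) :
    ∑' i, w i * c (g - n i) ≤ ∑' x, c x :=
  calc ∑' i, w i * c (g - n i) ≤ ∑' i, c (g - n i) :=
        ENNReal.tsum_le_tsum fun i => mul_le_of_le_one_left zero_le (hw i)
    _ ≤ ∑' x, c x :=
        tsum_comp_le_tsum_of_injective (sub_right_injective.comp hn) c

theorem tsum_tsum_mul_comp_sub (w : ι → ℝ≥0∞) (n : ι → G) (c : G → ℝ≥0∞) :
    ∑' g, ∑' i, w i * c (g - n i) = (∑' i, w i) * ∑' x, c x := by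
  rw [ENNReal.tsum_comm, ← ENNReal.tsum_mul_right]
  refine tsum_congr fun i => ?_
  rw [ENNReal.tsum_mul_left, ← (Equiv.subRight (n i)).tsum_eq c]
  rfl

theorem tsum_rpow_tsum_mul_comp_sub_le {w : ι → ℝ≥0∞} (hw : ∀ i, w i ≤ 1) {n : ι → G}
    (hn : Injective n) (c : G → ℝ≥0∞) {r : ℝ} (hr : 1 ≤ r) :
    ∑' g, (∑' i, w i * c (g - n i)) ^ r ≤ (∑' i, w i) * (∑' x, c x) ^ r := by
  set S := ∑' x, c x
  calc ∑' g, (∑' i, w i * c (g - n i)) ^ r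
      ≤ ∑' g, (∑' i, w i * c (g - n i)) * S ^ (r - 1) :=
        ENNReal.tsum_le_tsum fun g =>
          rpow_le_mul_rpow_sub_one (tsum_mul_comp_sub_le_tsum hw hn c g) hr
    _ = (∑' i, w i) * S ^ r := by
        rw [ENNReal.tsum_mul_right, tsum_tsum_mul_comp_sub, mul_assoc,
          ← rpow_eq_mul_rpow_sub_one S hr]

end Shifts

end ENNReal

theorem one_add_le_two_rpow_two_mul {t : ℝ} (ht : 0 ≤ t) : 1 + t ≤ (2 : ℝ) ^ (2 * t) := by
  have hlog : (1 : ℝ) ≤ 2 * Real.log 2 := by linarith [Real.log_two_gt_d9]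
  rw [Real.rpow_def_of_pos two_pos]
  nlinarith [Real.add_one_le_exp (Real.log 2 * (2 * t))]

theorem tsum_ofReal_two_rpow_pow_succ_le {t : ℝ} (ht : 0 < t) :
    ∑' i : ℕ, ENNReal.ofReal (((2 : ℝ) ^ (-(2 * t))) ^ (i + 1)) ≤ ENNReal.ofReal t⁻¹ := by
  set r := (2 : ℝ) ^ (-(2 * t))
  have hr0 : 0 ≤ r := by positivity
  have hr : r * (1 + t) ≤ 1 := by
    rw [show r = ((2 : ℝ) ^ (2 * t))⁻¹ from Real.rpow_neg zero_le_two _]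
    exact inv_mul_le_one_of_le₀ (one_add_le_two_rpow_two_mul ht.le) (by positivity)
  have hr1 : r < 1 := by nlinarith
  have hsum : HasSum (fun i : ℕ => r ^ (i + 1)) (r * (1 - r)⁻¹) := by
    simpa only [pow_succ'] using (hasSum_geometric_of_lt_one hr0 hr1).mul_left r
  rw [← ENNReal.ofReal_tsum_of_nonneg (fun i => by positivity) hsum.summable, hsum.tsum_eq]
  refine ENNReal.ofReal_le_ofReal ?_
  rw [← div_eq_mul_inv, div_le_iff₀ (sub_pos.2 hr1), inv_mul_eq_div, le_div_iff₀ ht]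
  linarith

theorem two_rpow_mul_two_rpow_eq (s k : ℝ) (m : ℕ) :
    (2 : ℝ) ^ (2 * -(m : ℝ)) * 2 ^ (2 * k * s) =
      ((2 : ℝ) ^ (-(2 * (1 - s)))) ^ m * 2 ^ (2 * (k - m) * s) := by
  rw [← Real.rpow_natCast, ← Real.rpow_mul zero_le_two, ← Real.rpow_add two_pos,
    ← Real.rpow_add two_pos]
  ring_nf

/-- Low-frequency summation lemma for `p ≥ 2`: if `S = ∑_ℓ 2^{2ℓs} a_ℓ² < ∞` then
`∑_{k∈ℤ} (∑_{j<0} 2^{2j} 2^{2ks} a_{k+j}²)^{p/2} ≤ C (1-s)⁻¹ S^{p/2}`.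
Here negative `j` are parametrized by `j = -(i+1)` for `i : ℕ`. -/
theorem discrete_low_frequency_lemma (p : ℝ) (hp : 2 ≤ p) :
    ∃ C : ℝ, 0 < C ∧ ∀ s : ℝ, 0 < s → s < 1 →
      ∀ a : ℤ → ℝ, (∀ ℓ, 0 ≤ a ℓ) →
        (∑' ℓ : ℤ, ENNReal.ofReal ((2 : ℝ) ^ (2 * (ℓ : ℝ) * s) * a ℓ ^ 2)) ≠ ⊤ →
        ∑' k : ℤ, (∑' i : ℕ, ENNReal.ofReal
            ((2 : ℝ) ^ (2 * (-((i : ℝ) + 1))) * (2 : ℝ) ^ (2 * (k : ℝ) * s) *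
              a (k - (i + 1)) ^ 2)) ^ (p / 2) ≤
          ENNReal.ofReal (C * (1 - s)⁻¹) *
            (∑' ℓ : ℤ, ENNReal.ofReal ((2 : ℝ) ^ (2 * (ℓ : ℝ) * s) * a ℓ ^ 2)) ^ (p / 2) := by
  refine ⟨1, one_pos, fun s hs hs1 a _ _ => ?_⟩
  set c : ℤ → ℝ≥0∞ := fun ℓ => ENNReal.ofReal ((2 : ℝ) ^ (2 * (ℓ : ℝ) * s) * a ℓ ^ 2)
  set w : ℕ → ℝ≥0∞ := fun i => ENNReal.ofReal (((2 : ℝ) ^ (-(2 * (1 - s)))) ^ (i + 1))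
  have hsummand : ∀ (k : ℤ) (i : ℕ), ENNReal.ofReal
      ((2 : ℝ) ^ (2 * (-((i : ℝ) + 1))) * (2 : ℝ) ^ (2 * (k : ℝ) * s) * a (k - (i + 1)) ^ 2) =
        w i * c (k - (i + 1)) := by
    intro k i
    have h := two_rpow_mul_two_rpow_eq s k (i + 1)
    push_cast at h
    simp only [w, c]
    rw [h, mul_assoc, ENNReal.ofReal_mul (by positivity)]
    push_cast
    rfl
  have hw : ∀ i, w i ≤ 1 := fun i => ENNReal.ofReal_le_one.2 <|
    pow_le_one₀ (by positivity) (Real.rpow_le_one_of_one_le_of_nonpos one_le_two (by linarith))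
  simp_rw [hsummand, one_mul]
  calc _ ≤ (∑' i, w i) * (∑' ℓ, c ℓ) ^ (p / 2) :=
        ENNReal.tsum_rpow_tsum_mul_comp_sub_le hw
          ((add_left_injective 1).comp Nat.cast_injective) c (by linarith)
    _ ≤ _ := by
        gcongr
        exact tsum_ofReal_two_rpow_pow_succ_le (sub_pos.2 hs1)
end
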